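/- Fix d > 1 and 0 < λ < ∞, and let f_λ denote the unique fixed point of the truncated cavity operator T, extended to ℝ by 1 on (-∞,-λ] and 0 on (λ,∞). Then for all x ≥ 0, f_λ(x) ≤ exp(-x^d / e). -/

import Mathlib

open MeasureTheory Set

/-- The truncated cavity operator `T`. -/
noncomputable def T (d lam : ℝ) (f : ℝ → ℝ) : ℝ → ℝ :=
  fun x => Real.exp (-(d * ∫ y in (-x)..lam, (x + y) ^ (d - 1) * f y))

/-- `f` is the fixed point of the truncated cavity operator on `[-λ, λ]`
(non-increasing and `[0,1]`-valued there), extended to `ℝ` by `1` on `(-∞, -λ]`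
and `0` on `(λ, ∞)`. -/
def ExtFixedPoint (d lam : ℝ) (f : ℝ → ℝ) : Prop :=
  AntitoneOn f (Icc (-lam) lam) ∧
  (∀ x ∈ Icc (-lam) lam, f x ∈ Icc (0 : ℝ) 1) ∧
  (∀ x ≤ -lam, f x = 1) ∧ (∀ x > lam, f x = 0) ∧
  (∀ x ∈ Icc (-lam) lam, T d lam f x = f x)

/-!
Write `c = f_λ(0) = exp(-b)` with `b = d ∫₀^λ y^(d-1) f_λ(y) dy`. For `0 ≤ x ≤ λ`, split the
cavity integral at `0`: on `[-x, 0]` monotonicity gives `f_λ ≥ c`, contributing at least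
`c x^d`, and on `[0, λ]` the kernel `(x + y)^(d-1)` dominates `y^(d-1)`, contributing at least
`b`. Hence `f_λ(x) ≤ c exp(-c x^d)`. Feeding this back into the definition of `b` gives
`b ≤ c ∫₀^∞ d y^(d-1) exp(-c y^d) dy = 1`, so `c ≥ 1/e`, and the bound follows since `c ≤ 1`.
-/

open Real intervalIntegral

theorem integral_add_rpow_sub_one {d : ℝ} (hd : 0 < d) (x : ℝ) :
    ∫ y in (-x)..0, (x + y) ^ (d - 1) = x ^ d / d := by
  rw [integral_comp_add_left (fun u : ℝ => u ^ (d - 1)) x, add_neg_cancel, add_zero,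
    integral_rpow (Or.inl (by linarith)), sub_add_cancel, zero_rpow hd.ne', sub_zero]

theorem integral_rpow_sub_one_mul_exp_neg_le {c d : ℝ} (hc : 0 < c) (hd : 1 ≤ d) (L : ℝ) :
    ∫ y in 0..L, d * y ^ (d - 1) * exp (-(c * y ^ d)) ≤ c⁻¹ := by
  have hderiv : ∀ y : ℝ, HasDerivAt (fun s => -c⁻¹ * exp (-(c * s ^ d)))
      (d * y ^ (d - 1) * exp (-(c * y ^ d))) y := by
    intro y
    have hinner : HasDerivAt (fun s => -(c * s ^ d)) (-(c * (d * y ^ (d - 1)))) y :=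
      ((hasDerivAt_rpow_const (Or.inr hd)).const_mul c).neg
    refine (hinner.exp.const_mul (-c⁻¹)).congr_deriv ?_
    field_simp
  have hcont : Continuous fun y : ℝ => d * y ^ (d - 1) * exp (-(c * y ^ d)) := by
    have := continuous_rpow_const (q := d - 1) (by linarith)
    have := continuous_rpow_const (q := d) (by linarith)
    fun_prop
  rw [integral_eq_sub_of_hasDerivAt (fun y _ => hderiv y) (hcont.intervalIntegrable _ _),
    zero_rpow (by linarith : d ≠ 0), mul_zero, neg_zero, exp_zero]
  have : 0 ≤ c⁻¹ * exp (-(c * L ^ d)) := by positivity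
  linarith

namespace ExtFixedPoint

variable {d lam : ℝ} {f : ℝ → ℝ}

theorem antitoneOn (h : ExtFixedPoint d lam f) : AntitoneOn f (Icc (-lam) lam) := h.1

theorem mem_Icc (h : ExtFixedPoint d lam f) {x : ℝ} (hx : x ∈ Icc (-lam) lam) :
    f x ∈ Icc (0 : ℝ) 1 := h.2.1 x hx

theorem eq_zero_of_lt (h : ExtFixedPoint d lam f) {x : ℝ} (hx : lam < x) : f x = 0 :=
  h.2.2.2.1 x hx

theorem T_apply_eq (h : ExtFixedPoint d lam f) {x : ℝ} (hx : x ∈ Icc (-lam) lam) :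
    T d lam f x = f x := h.2.2.2.2 x hx

theorem intervalIntegrable_mul (h : ExtFixedPoint d lam f) {g : ℝ → ℝ} (hg : Continuous g)
    {u v : ℝ} (hu : -lam ≤ u) (huv : u ≤ v) (hv : v ≤ lam) :
    IntervalIntegrable (fun y => g y * f y) volume u v := by
  have hsub : uIcc u v ⊆ Icc (-lam) lam := by
    rw [uIcc_of_le huv]
    exact Icc_subset_Icc hu hv
  exact (h.antitoneOn.mono hsub).intervalIntegrable.continuousOn_mul hg.continuousOn

theorem apply_zero (h : ExtFixedPoint d lam f) (hlam : 0 ≤ lam) :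
    f 0 = exp (-(d * ∫ y in 0..lam, y ^ (d - 1) * f y)) := by
  simpa [T] using (h.T_apply_eq ⟨by linarith, hlam⟩).symm

theorem apply_zero_mul_rpow_add_le (h : ExtFixedPoint d lam f) (hd : 1 ≤ d) {x : ℝ}
    (hx : 0 ≤ x) (hxl : x ≤ lam) :
    f 0 * x ^ d + d * ∫ y in 0..lam, y ^ (d - 1) * f y ≤
      d * ∫ y in (-x)..lam, (x + y) ^ (d - 1) * f y := by
  have hpow := continuous_rpow_const (q := d - 1) (by linarith)
  have hker : Continuous fun y => (x + y) ^ (d - 1) := hpow.comp (continuous_const_add x)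
  have hleft := h.intervalIntegrable_mul hker (u := -x) (v := 0) (by linarith) (by linarith)
    (by linarith)
  have hright := h.intervalIntegrable_mul hker (u := 0) (v := lam) (by linarith) (by linarith)
    le_rfl
  have hf0 : f 0 * (x ^ d / d) ≤ ∫ y in (-x)..0, (x + y) ^ (d - 1) * f y := by
    rw [← integral_add_rpow_sub_one (by linarith) x, ← intervalIntegral.integral_const_mul]
    refine integral_mono_on (by linarith) ((continuous_const.mul hker).intervalIntegrable _ _)
      hleft ?_
    intro y hy
    rw [mul_comm (f 0)]
    refine mul_le_mul_of_nonneg_left ?_ (rpow_nonneg (by linarith [hy.1]) _)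
    exact h.antitoneOn ⟨by linarith [hy.1], by linarith [hy.2]⟩ ⟨by linarith, by linarith⟩ hy.2
  have hb : ∫ y in 0..lam, y ^ (d - 1) * f y ≤ ∫ y in 0..lam, (x + y) ^ (d - 1) * f y := by
    refine integral_mono_on (by linarith)
      (h.intervalIntegrable_mul hpow (by linarith) (by linarith) le_rfl) hright ?_
    intro y hy
    refine mul_le_mul_of_nonneg_right ?_ (h.mem_Icc ⟨by linarith [hy.1], hy.2⟩).1
    exact rpow_le_rpow hy.1 (by linarith) (by linarith)
  rw [← integral_add_adjacent_intervals hleft hright, mul_add]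
  have hd0 : 0 < d := by linarith
  have : f 0 * x ^ d = d * (f 0 * (x ^ d / d)) := by field_simp
  rw [this]
  gcongr

theorem le_apply_zero_mul_exp (h : ExtFixedPoint d lam f) (hd : 1 ≤ d) {x : ℝ}
    (hx : 0 ≤ x) (hxl : x ≤ lam) :
    f x ≤ f 0 * exp (-(f 0 * x ^ d)) := by
  calc f x = exp (-(d * ∫ y in (-x)..lam, (x + y) ^ (d - 1) * f y)) :=
        (h.T_apply_eq ⟨by linarith, hxl⟩).symm
    _ ≤ exp (-(f 0 * x ^ d + d * ∫ y in 0..lam, y ^ (d - 1) * f y)) := by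
        gcongr
        exact h.apply_zero_mul_rpow_add_le hd hx hxl
    _ = f 0 * exp (-(f 0 * x ^ d)) := by
        rw [h.apply_zero (by linarith), ← exp_add]
        ring_nf

theorem exp_neg_one_le_apply_zero (h : ExtFixedPoint d lam f) (hd : 1 ≤ d) (hlam : 0 ≤ lam) :
    exp (-1) ≤ f 0 := by
  have hc : 0 < f 0 := by
    rw [h.apply_zero hlam]
    exact exp_pos _
  have hpow := continuous_rpow_const (q := d - 1) (by linarith)
  have hcont : Continuous fun y : ℝ => f 0 * (d * y ^ (d - 1) * exp (-(f 0 * y ^ d))) := by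
    have := continuous_rpow_const (q := d) (by linarith)
    fun_prop
  have hb : d * ∫ y in 0..lam, y ^ (d - 1) * f y ≤ 1 :=
    calc d * ∫ y in 0..lam, y ^ (d - 1) * f y
        = ∫ y in 0..lam, d * (y ^ (d - 1) * f y) :=
          (intervalIntegral.integral_const_mul _ _).symm
      _ ≤ ∫ y in 0..lam, f 0 * (d * y ^ (d - 1) * exp (-(f 0 * y ^ d))) := by
          refine integral_mono_on hlam
            ((h.intervalIntegrable_mul hpow (by linarith) hlam le_rfl).const_mul d)
            (hcont.intervalIntegrable _ _) ?_
          intro y hy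
          have := h.le_apply_zero_mul_exp hd hy.1 hy.2
          have : 0 ≤ d * y ^ (d - 1) := mul_nonneg (by linarith) (rpow_nonneg hy.1 _)
          nlinarith
      _ ≤ f 0 * (f 0)⁻¹ := by
          rw [intervalIntegral.integral_const_mul]
          gcongr
          exact integral_rpow_sub_one_mul_exp_neg_le hc hd lam
      _ = 1 := mul_inv_cancel₀ hc.ne'
  rw [h.apply_zero hlam]
  gcongr

end ExtFixedPoint

/-- for all `x ≥ 0`, `f_λ(x) ≤ exp(-x^d / e)`. -/
theorem fixedPoint_uniform_upper (d lam : ℝ) (hd : 1 < d) (hlam : 0 < lam)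
    (flam : ℝ → ℝ) (hflam : ExtFixedPoint d lam flam) :
    ∀ x : ℝ, 0 ≤ x → flam x ≤ Real.exp (-(x ^ d / Real.exp 1)) := by
  intro x hx
  rcases le_or_gt x lam with hxl | hxl
  · have hc1 : flam 0 ≤ 1 := (hflam.mem_Icc ⟨by linarith, hlam.le⟩).2
    have hce := hflam.exp_neg_one_le_apply_zero hd.le hlam.le
    have hxd : 0 ≤ x ^ d := rpow_nonneg hx _
    calc flam x ≤ flam 0 * exp (-(flam 0 * x ^ d)) :=
          hflam.le_apply_zero_mul_exp hd.le hx hxl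
      _ ≤ 1 * exp (-(exp (-1) * x ^ d)) := by gcongr
      _ = exp (-(x ^ d / exp 1)) := by rw [one_mul, exp_neg 1, inv_mul_eq_div]
  · rw [hflam.eq_zero_of_lt hxl]
    positivity
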